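/- arXiv:1706.07978 — 4 statements merged into one kernel-verified Lean document; each statement's English description precedes it below -/
import Mathlib

section
/- If (a_i)_{i≥1} is a real sequence with ∑_{i=1}^∞ i² a_i² < ∞, then for every j ≥ 1 the tail series ∑_{i=j}^∞ a_i converges absolutely, and there exists a universal constant C (independent of the sequence) such that ∑_{j=1}^∞ (∑_{i=j}^∞ a_i)² ≤ C ∑_{i=1}^∞ i² a_i². -/
/-!
Write `T_j = ∑_{i ≥ j} a_i` and `w_k = (k + 1) ^ (3/2)` (`hardyWeight`). Cauchy–Schwarz with the
splitting `a_i² = (w_i a_i²) · w_i⁻¹`, together with the telescoping bound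
`∑_{i ≥ j} w_i⁻¹ ≤ 6 (j + 1) ^ (-1/2)`, gives `T_j² ≤ 6 (j + 1) ^ (-1/2) ∑_{i ≥ j} w_i a_i²`.
Summing over `j` and exchanging the order of summation, `w_i a_i²` is weighted by
`∑_{j ≤ i} (j + 1) ^ (-1/2) ≤ 2 (i + 1) ^ (1/2)`, and `(i + 1) ^ (1/2) w_i = (i + 1)²`; so `C = 12`.
-/

open Finset Filter

theorem summable_abs_and_sq_tsum_le_of_sq_le_mul {ι : Type*} {x u v : ι → ℝ}
    (hu : ∀ i, 0 ≤ u i) (hv : ∀ i, 0 ≤ v i) (hxuv : ∀ i, x i ^ 2 ≤ u i * v i)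
    (hu_sum : Summable u) (hv_sum : Summable v) :
    Summable (fun i => |x i|) ∧ (∑' i, x i) ^ 2 ≤ (∑' i, u i) * ∑' i, v i := by
  have habs : Summable (fun i => |x i|) := by
    refine ((hu_sum.add hv_sum).div_const 2).of_nonneg_of_le (fun i => abs_nonneg _) fun i => ?_
    have := two_mul_le_add_of_sq_le_mul (hu i) (hv i) ((sq_abs (x i)).trans_le (hxuv i))
    linarith
  refine ⟨habs, le_of_tendsto_of_tendsto' ((habs.of_abs.hasSum).pow 2)
    (Tendsto.mul hu_sum.hasSum hv_sum.hasSum) fun s => ?_⟩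
  exact sum_sq_le_sum_mul_sum_of_sq_le_mul s (fun i _ => hu i) (fun i _ => hv i) fun i _ => hxuv i

theorem sum_range_le_sub_of_le_sub_succ {f g : ℕ → ℝ} (hfg : ∀ i, f i ≤ g (i + 1) - g i)
    (n : ℕ) : ∑ i ∈ range n, f i ≤ g n - g 0 :=
  (sum_le_sum fun i _ => hfg i).trans_eq (sum_range_sub g n)

theorem summable_and_tsum_le_of_le_sub_succ {f g : ℕ → ℝ} (hf : ∀ n, 0 ≤ f n)
    (hg : ∀ n, 0 ≤ g n) (hfg : ∀ n, f n ≤ g n - g (n + 1)) :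
    Summable f ∧ ∑' n, f n ≤ g 0 := by
  have hpartial (n : ℕ) : ∑ i ∈ range n, f i ≤ g 0 := by
    have := sum_range_le_sub_of_le_sub_succ (f := f) (g := fun n => -g n)
      (fun n => by linarith [hfg n]) n
    linarith [hg n]
  exact ⟨summable_of_sum_range_le hf hpartial, Real.tsum_le_of_sum_range_le hf hpartial⟩

theorem inv_sqrt_add_one_le {x : ℝ} (hx : 0 ≤ x) :
    (√(x + 1))⁻¹ ≤ 2 * (√(x + 1) - √x) := by
  have hx1 : 0 < √(x + 1) := Real.sqrt_pos.2 (by linarith)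
  have hsq : √(x + 1) ^ 2 = √x ^ 2 + 1 := by
    rw [Real.sq_sqrt hx, Real.sq_sqrt (by linarith)]
  have hle : √x ≤ √(x + 1) := Real.sqrt_le_sqrt (by linarith)
  rw [inv_le_iff_one_le_mul₀' hx1]
  nlinarith [Real.sqrt_nonneg x]

theorem inv_mul_sqrt_le {x : ℝ} (hx : 0 ≤ x) :
    ((x + 1) * √(x + 1))⁻¹ ≤ 6 * ((√(x + 1))⁻¹ - (√(x + 2))⁻¹) := by
  set s := √(x + 1)
  set t := √(x + 2)
  have hs2 : s ^ 2 = x + 1 := Real.sq_sqrt (by linarith)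
  have ht2 : t ^ 2 = s ^ 2 + 1 := by rw [hs2, Real.sq_sqrt (by linarith)]; ring
  have hs1 : 1 ≤ s := by nlinarith [Real.sqrt_nonneg (x + 1)]
  have hst : s ≤ t := Real.sqrt_le_sqrt (by linarith)
  have ht : t ≤ 2 * s := by nlinarith
  have hdiff : s⁻¹ - t⁻¹ = (s * t * (s + t))⁻¹ := by
    have : 0 < s := by linarith
    have : 0 < t := by linarith
    field_simp
    linear_combination ht2
  rw [← hs2, hdiff, ← div_eq_mul_inv, le_div_iff₀ (by positivity), inv_mul_le_iff₀ (by positivity)]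
  nlinarith [mul_le_mul hst ht (by positivity) (by positivity)]

theorem tsum_nat_add_eq_tsum_ite {h : ℕ → ℝ} (hh : Summable h) (j : ℕ) :
    ∑' i, h (j + i) = ∑' k, if j ≤ k then h k else 0 := by
  have hshift : (fun i => if j ≤ i + j then h (i + j) else 0) = fun i => h (i + j) := by
    ext i; rw [if_pos (Nat.le_add_left j i)]
  have hite : Summable fun k => if j ≤ k then h k else 0 :=
    (summable_nat_add_iff j).1 (hshift ▸ (summable_nat_add_iff j).2 hh)
  simp only [add_comm j]
  rw [← hite.sum_add_tsum_nat_add j, hshift, sum_eq_zero fun k hk => if_neg (by simpa using hk),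
    zero_add]

theorem summable_and_tsum_mul_tsum_tail_le {c h B : ℕ → ℝ} (hc : ∀ j, 0 ≤ c j)
    (hh : ∀ i, 0 ≤ h i) (hh_sum : Summable h) (hcB : ∀ i, ∑ j ∈ range (i + 1), c j ≤ B i)
    (hBh : Summable fun i => B i * h i) :
    Summable (fun j => c j * ∑' i, h (j + i)) ∧
      ∑' j, c j * ∑' i, h (j + i) ≤ ∑' i, B i * h i := by
  have hnonneg (j : ℕ) : 0 ≤ c j * ∑' i, h (j + i) :=
    mul_nonneg (hc j) (tsum_nonneg fun i => hh _)
  have hpartial (n : ℕ) : ∑ j ∈ range n, c j * ∑' i, h (j + i) ≤ ∑' i, B i * h i := by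
    have hweight (k : ℕ) : ∑ j ∈ range n with j ≤ k, c j ≤ B k := by
      refine (sum_le_sum_of_subset_of_nonneg ?_ fun j _ _ => hc j).trans (hcB k)
      intro j
      simp only [mem_filter, mem_range]
      omega
    have hite (j : ℕ) : Summable fun k => if j ≤ k then c j * h k else 0 :=
      (hh_sum.mul_left (c j)).of_nonneg_of_le
        (fun k => by split_ifs; exacts [mul_nonneg (hc j) (hh k), le_rfl])
        fun k => by split_ifs; exacts [le_rfl, mul_nonneg (hc j) (hh k)]
    have hbound (k : ℕ) : (∑ j ∈ range n with j ≤ k, c j) * h k ≤ B k * h k :=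
      mul_le_mul_of_nonneg_right (hweight k) (hh k)
    have hweighted : Summable fun k => (∑ j ∈ range n with j ≤ k, c j) * h k :=
      hBh.of_nonneg_of_le (fun k => mul_nonneg (sum_nonneg fun j _ => hc j) (hh k)) hbound
    calc ∑ j ∈ range n, c j * ∑' i, h (j + i)
        = ∑ j ∈ range n, ∑' k, if j ≤ k then c j * h k else 0 := by
          refine sum_congr rfl fun j _ => ?_
          rw [tsum_nat_add_eq_tsum_ite hh_sum, ← tsum_mul_left]
          simp only [mul_ite, mul_zero]
      _ = ∑' k, ∑ j ∈ range n, if j ≤ k then c j * h k else 0 :=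
          (Summable.tsum_finsetSum fun j _ => hite j).symm
      _ = ∑' k, (∑ j ∈ range n with j ≤ k, c j) * h k := by
          simp only [sum_mul, sum_filter, ite_mul, zero_mul]
      _ ≤ ∑' k, B k * h k := hweighted.tsum_le_tsum hbound hBh
  exact ⟨summable_of_sum_range_le hnonneg hpartial, Real.tsum_le_of_sum_range_le hnonneg hpartial⟩

theorem sum_range_inv_sqrt_add_one_le (n : ℕ) :
    ∑ j ∈ range n, (√((j : ℝ) + 1))⁻¹ ≤ 2 * √(n : ℝ) := by
  simpa using sum_range_le_sub_of_le_sub_succ (g := fun j : ℕ => 2 * √(j : ℝ))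
    (fun j => by push_cast; linarith [inv_sqrt_add_one_le (Nat.cast_nonneg (α := ℝ) j)]) n

noncomputable def hardyWeight (k : ℕ) : ℝ := ((k : ℝ) + 1) * √((k : ℝ) + 1)

theorem hardyWeight_pos (k : ℕ) : 0 < hardyWeight k := by
  unfold hardyWeight; positivity

theorem sqrt_mul_hardyWeight (k : ℕ) : √((k : ℝ) + 1) * hardyWeight k = ((k : ℝ) + 1) ^ 2 := by
  rw [hardyWeight, mul_left_comm, Real.mul_self_sqrt (by positivity), sq]

theorem summable_and_tsum_inv_hardyWeight_le (j : ℕ) :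
    Summable (fun i => (hardyWeight (j + i))⁻¹) ∧
      ∑' i, (hardyWeight (j + i))⁻¹ ≤ 6 * (√((j : ℝ) + 1))⁻¹ := by
  have hstep (i : ℕ) : (hardyWeight (j + i))⁻¹ ≤
      6 * (√(((j + i : ℕ) : ℝ) + 1))⁻¹ - 6 * (√(((j + (i + 1) : ℕ) : ℝ) + 1))⁻¹ := by
    have hcast : ((j + (i + 1) : ℕ) : ℝ) + 1 = ((j + i : ℕ) : ℝ) + 2 := by push_cast; ring
    rw [hcast, ← mul_sub]
    exact inv_mul_sqrt_le (Nat.cast_nonneg _)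
  simpa using summable_and_tsum_le_of_le_sub_succ (fun i => (inv_pos.2 (hardyWeight_pos _)).le)
    (fun i => by positivity) hstep

theorem hardyWeight_le (k : ℕ) : hardyWeight k ≤ ((k : ℝ) + 1) ^ 2 := by
  rw [← sqrt_mul_hardyWeight]
  exact le_mul_of_one_le_left (hardyWeight_pos k).le (Real.one_le_sqrt.2 (by simp))

theorem summable_abs_and_sq_tsum_tail_le {a : ℕ → ℝ}
    (ha : Summable fun k => hardyWeight k * a k ^ 2) (j : ℕ) :
    Summable (fun i => |a (j + i)|) ∧ (∑' i, a (j + i)) ^ 2 ≤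
      6 * ((√((j : ℝ) + 1))⁻¹ * ∑' i, hardyWeight (j + i) * a (j + i) ^ 2) := by
  obtain ⟨hinv, hinv_le⟩ := summable_and_tsum_inv_hardyWeight_le j
  have hsplit (i : ℕ) :
      a (j + i) ^ 2 ≤ hardyWeight (j + i) * a (j + i) ^ 2 * (hardyWeight (j + i))⁻¹ := by
    rw [mul_right_comm, mul_inv_cancel₀ (hardyWeight_pos _).ne', one_mul]
  obtain ⟨habs, hCS⟩ := summable_abs_and_sq_tsum_le_of_sq_le_mul
    (fun i => mul_nonneg (hardyWeight_pos _).le (sq_nonneg _))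
    (fun i => (inv_pos.2 (hardyWeight_pos _)).le) hsplit
    (ha.comp_injective (add_right_injective j)) hinv
  refine ⟨habs, hCS.trans ?_⟩
  calc (∑' i, hardyWeight (j + i) * a (j + i) ^ 2) * ∑' i, (hardyWeight (j + i))⁻¹
      ≤ (∑' i, hardyWeight (j + i) * a (j + i) ^ 2) * (6 * (√((j : ℝ) + 1))⁻¹) :=
        mul_le_mul_of_nonneg_left hinv_le
          (tsum_nonneg fun i => mul_nonneg (hardyWeight_pos _).le (sq_nonneg _))
    _ = _ := by ring

/-- Here `a i` stands for `a_{i+1}`, and the tail index `j : ℕ` for `j + 1`. -/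
theorem stmt1 : ∃ C : ℝ, 0 < C ∧ ∀ a : ℕ → ℝ,
    Summable (fun i : ℕ => ((i : ℝ) + 1) ^ 2 * a i ^ 2) →
      (∀ j : ℕ, Summable fun i : ℕ => |a (j + i)|) ∧
      Summable (fun j : ℕ => (∑' i : ℕ, a (j + i)) ^ 2) ∧
      ∑' j : ℕ, (∑' i : ℕ, a (j + i)) ^ 2 ≤
        C * ∑' i : ℕ, ((i : ℝ) + 1) ^ 2 * a i ^ 2 := by
  refine ⟨12, by norm_num, fun a ha => ?_⟩
  have hw : Summable fun k => hardyWeight k * a k ^ 2 :=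
    ha.of_nonneg_of_le (fun k => mul_nonneg (hardyWeight_pos k).le (sq_nonneg _))
      fun k => mul_le_mul_of_nonneg_right (hardyWeight_le k) (sq_nonneg _)
  have hB (i : ℕ) : 2 * √((i : ℝ) + 1) * (hardyWeight i * a i ^ 2) =
      2 * (((i : ℝ) + 1) ^ 2 * a i ^ 2) := by
    rw [← sqrt_mul_hardyWeight]; ring
  obtain ⟨hsum, hswap⟩ := summable_and_tsum_mul_tsum_tail_le
    (c := fun j => (√((j : ℝ) + 1))⁻¹) (B := fun i => 2 * √((i : ℝ) + 1))
    (fun j => by positivity) (fun i => mul_nonneg (hardyWeight_pos i).le (sq_nonneg _)) hw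
    (fun i => by simpa using sum_range_inv_sqrt_add_one_le (i + 1))
    ((ha.mul_left 2).congr fun i => (hB i).symm)
  have htail := summable_abs_and_sq_tsum_tail_le hw
  have hsq : Summable fun j : ℕ => (∑' i : ℕ, a (j + i)) ^ 2 :=
    (hsum.mul_left 6).of_nonneg_of_le (fun j => sq_nonneg _) fun j => (htail j).2
  refine ⟨fun j => (htail j).1, hsq, ?_⟩
  calc ∑' j : ℕ, (∑' i : ℕ, a (j + i)) ^ 2
      ≤ ∑' j : ℕ, 6 * ((√((j : ℝ) + 1))⁻¹ * ∑' i : ℕ, hardyWeight (j + i) * a (j + i) ^ 2) :=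
        hsq.tsum_le_tsum (fun j => (htail j).2) (hsum.mul_left 6)
    _ ≤ 6 * ∑' i : ℕ, 2 * √((i : ℝ) + 1) * (hardyWeight i * a i ^ 2) := by
        rw [tsum_mul_left]; gcongr
    _ = 12 * ∑' i : ℕ, ((i : ℝ) + 1) ^ 2 * a i ^ 2 := by
        simp only [hB, tsum_mul_left]
        ring
end

section
/- If (a_{i,j})_{i,j≥1} is a double-indexed real array with ∑_{i=1}^∞ ∑_{j=1}^∞ i² j² a_{i,j}² < ∞, then for all j₁, j₂ ≥ 1 the double tail sum ∑_{i₁≥j₁} ∑_{i₂≥j₂} a_{i₁,i₂} converges absolutely, and there is a universal constant C with ∑_{j₁=1}^∞ ∑_{j₂=1}^∞ (∑_{i₁≥j₁} ∑_{i₂≥j₂} a_{i₁,i₂})² ≤ C ∑_{i₁=1}^∞ ∑_{i₂=1}^∞ i₁² i₂² a_{i₁,i₂}². -/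
/-!
Weighted Cauchy–Schwarz with the weight `(i + 1) ^ (3 / 2)` gives, for `x ≥ 0`,
`(∑_{i ≥ j} x i) ^ 2 ≤ (∑_{i ≥ j} (i + 1) ^ (-3/2)) * ∑_{i ≥ j} (i + 1) ^ (3/2) * x i ^ 2`,
and the first factor is at most `4 / √(j + 1)`. Summing over `j` and exchanging the order of
summation produces the factor `∑_{j ≤ i} 4 / √(j + 1) ≤ 8 √(i + 1)`, hence the one-dimensional
inequality `∑_j (∑_{i ≥ j} x i) ^ 2 ≤ 8 ∑_i (i + 1) ^ 2 * x i ^ 2`. Working in `ℝ≥0∞`, where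
sums may be freely interchanged, applying it in each variable gives the two-dimensional
inequality with constant `64`; for `x = |a|` its finiteness gives the absolute convergence
of the tails.
-/

open Finset
open scoped ENNReal

namespace Real

theorem one_div_mul_sqrt_le_sub {x : ℝ} (hx : 0 ≤ x) :
    1 / ((x + 1) * √(x + 1)) ≤ 4 / √(x + 1) - 4 / √(x + 1 + 1) := by
  have ht2 : √(x + 1) ^ 2 = x + 1 := sq_sqrt (by linarith)
  have hu2 : √(x + 1 + 1) ^ 2 = √(x + 1) ^ 2 + 1 := by rw [ht2, sq_sqrt (by linarith)]
  have ht1 : 1 ≤ √(x + 1) := one_le_sqrt.2 (by linarith)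
  have htu : √(x + 1) ≤ √(x + 1 + 1) := sqrt_le_sqrt (by linarith)
  set t := √(x + 1)
  set u := √(x + 1 + 1)
  rw [← ht2, div_sub_div _ _ (by positivity) (by positivity),
    div_le_div_iff₀ (by positivity) (by positivity)]
  -- `(u - t) (u + t) = 1`, so the claim reduces to `u ^ 2 + u t ≤ 4 t ^ 2`
  have hkey : (u + t) * (4 * (u - t) * t ^ 2 - u) = 4 * t ^ 2 - u ^ 2 - u * t := by
    linear_combination (4 * t ^ 2) * hu2
  have hpos : 0 ≤ 4 * (u - t) * t ^ 2 - u := by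
    refine nonneg_of_mul_nonneg_right (a := u + t) ?_ (by linarith)
    rw [hkey]
    nlinarith [sq_nonneg (u - t)]
  nlinarith

theorem one_div_sqrt_le_sub {x : ℝ} (hx : 0 ≤ x) : 1 / √(x + 1) ≤ 2 * √(x + 1) - 2 * √x := by
  have ht2 : √(x + 1) ^ 2 = x + 1 := sq_sqrt (by linarith)
  have hs2 : √x ^ 2 = x := sq_sqrt hx
  have hst : √x ≤ √(x + 1) := sqrt_le_sqrt (by linarith)
  have ht : 0 < √(x + 1) := sqrt_pos.2 (by linarith)
  have hs : 0 ≤ √x := sqrt_nonneg x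
  rw [div_le_iff₀ ht]
  nlinarith

theorem sum_range_one_div_sqrt_le (n : ℕ) : ∑ k ∈ range n, 1 / √((k : ℝ) + 1) ≤ 2 * √n := by
  calc ∑ k ∈ range n, 1 / √((k : ℝ) + 1)
      ≤ ∑ k ∈ range n, (2 * √((k + 1 : ℕ) : ℝ) - 2 * √(k : ℝ)) :=
        sum_le_sum fun k _ => by push_cast; exact one_div_sqrt_le_sub k.cast_nonneg
    _ = 2 * √n := by rw [sum_range_sub (fun k : ℕ => 2 * √(k : ℝ))]; simp

theorem summable_and_tsum_le_of_tsum_enorm_le {ι : Type*} {f : ι → ℝ} {c : ℝ} (hc : 0 ≤ c)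
    (h : ∑' i, ‖f i‖ₑ ≤ ENNReal.ofReal c) : Summable f ∧ ∑' i, f i ≤ c := by
  refine ⟨.of_enorm (ne_top_of_le_ne_top ENNReal.ofReal_ne_top h), ?_⟩
  have h' := enorm_tsum_le_tsum_enorm.trans h
  rw [enorm_eq_ofReal_abs, ENNReal.ofReal_le_ofReal_iff hc] at h'
  exact (le_abs_self _).trans h'

end Real

namespace ENNReal

theorem sq_tsum_le_tsum_inv_mul_tsum {ι : Type*} (w x : ι → ℝ≥0∞) (hw₀ : ∀ i, w i ≠ 0)
    (hw : ∀ i, w i ≠ ∞) : (∑' i, x i) ^ 2 ≤ (∑' i, (w i)⁻¹) * ∑' i, w i * x i ^ 2 := by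
  have hx : ∀ i, (w i)⁻¹ * (w i * x i) = x i := fun i => by
    rw [← mul_assoc, ENNReal.inv_mul_cancel (hw₀ i) (hw i), one_mul]
  have hwx : ∀ i, (w i)⁻¹ * (w i * x i) ^ (2 : ℝ) = w i * x i ^ 2 := fun i => by
    rw [rpow_two, mul_pow, ← mul_assoc, sq (w i), ← mul_assoc,
      ENNReal.inv_mul_cancel (hw₀ i) (hw i), one_mul]
  have hsum : ∑' i, x i ≤
      (∑' i, (w i)⁻¹) ^ (2⁻¹ : ℝ) * (∑' i, w i * x i ^ 2) ^ (2⁻¹ : ℝ) := by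
    refine ENNReal.summable.tsum_le_of_sum_le fun s => ?_
    have h := inner_le_weight_mul_Lp_of_nonneg s one_le_two (fun i => (w i)⁻¹)
      (fun i => w i * x i)
    simp only [hx, hwx] at h
    rw [show (1 : ℝ) - 2⁻¹ = 2⁻¹ by norm_num] at h
    refine h.trans ?_
    gcongr <;> exact ENNReal.sum_le_tsum s
  calc (∑' i, x i) ^ 2
      ≤ ((∑' i, (w i)⁻¹) ^ (2⁻¹ : ℝ) * (∑' i, w i * x i ^ 2) ^ (2⁻¹ : ℝ)) ^ 2 := by gcongr
    _ = (∑' i, (w i)⁻¹) * ∑' i, w i * x i ^ 2 := by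
      rw [mul_pow, ← rpow_natCast, ← rpow_natCast (_ ^ _), ← rpow_mul, ← rpow_mul]
      norm_num

theorem tsum_tsum_mul_add_eq_tsum_sum_range_mul (w u : ℕ → ℝ≥0∞) :
    ∑' j, ∑' p, w j * u (j + p) = ∑' n, (∑ k ∈ range (n + 1), w k) * u n := by
  rw [← ENNReal.tsum_prod (f := fun j p => w j * u (j + p)),
    ← (HasAntidiagonal.sigmaAntidiagonalEquivProd (A := ℕ)).tsum_eq, ENNReal.tsum_sigma']
  refine tsum_congr fun n => ?_
  simp only [HasAntidiagonal.sigmaAntidiagonalEquivProd_apply]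
  calc ∑' q : antidiagonal n, w q.1.1 * u (q.1.1 + q.1.2)
      = ∑' q : antidiagonal n, w q.1.1 * u n :=
        tsum_congr fun q => by rw [mem_antidiagonal.1 q.2]
    _ = (∑ k ∈ range (n + 1), w k) * u n := by
        rw [Finset.tsum_subtype (antidiagonal n) fun q => w q.1 * u n, ← sum_mul,
          Nat.sum_antidiagonal_eq_sum_range_succ_mk]

theorem tsum_ofReal_le_of_le_sub {f g : ℕ → ℝ} (hf : ∀ n, 0 ≤ f n) (hg : ∀ n, 0 ≤ g n)
    (hfg : ∀ n, f n ≤ g n - g (n + 1)) : ∑' n, ENNReal.ofReal (f n) ≤ ENNReal.ofReal (g 0) := by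
  refine ENNReal.tsum_le_of_sum_range_le fun n => ?_
  rw [← ofReal_sum_of_nonneg fun k _ => hf k]
  refine ofReal_le_ofReal ?_
  calc ∑ k ∈ range n, f k ≤ ∑ k ∈ range n, (g k - g (k + 1)) := sum_le_sum fun k _ => hfg k
    _ = g 0 - g n := sum_range_sub' g n
    _ ≤ g 0 := sub_le_self _ (hg n)

theorem tsum_ofReal_one_div_mul_sqrt_le (j : ℕ) :
    ∑' p : ℕ, ENNReal.ofReal (1 / (((j : ℝ) + p + 1) * √((j : ℝ) + p + 1))) ≤
      ENNReal.ofReal (4 / √((j : ℝ) + 1)) := by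
  simpa using tsum_ofReal_le_of_le_sub (f := fun p => 1 / (((j : ℝ) + p + 1) * √((j : ℝ) + p + 1)))
    (g := fun p => 4 / √((j : ℝ) + p + 1)) (fun p => by positivity) (fun p => by positivity)
    (fun p => by
      simpa [add_assoc] using Real.one_div_mul_sqrt_le_sub (x := (j : ℝ) + p) (by positivity))

theorem sum_range_ofReal_div_sqrt_mul_le (n : ℕ) :
    (∑ k ∈ range (n + 1), ENNReal.ofReal (4 / √((k : ℝ) + 1))) *
      ENNReal.ofReal ((n + 1) * √(n + 1)) ≤ 8 * ((n : ℝ≥0∞) + 1) ^ 2 := by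
  have hsum : ∑ k ∈ range (n + 1), 4 / √((k : ℝ) + 1) ≤ 8 * √((n : ℝ) + 1) := by
    have h := Real.sum_range_one_div_sqrt_le (n + 1)
    push_cast at h
    simp_rw [div_eq_mul_one_div (4 : ℝ), ← mul_sum]
    linarith
  have hsq : √((n : ℝ) + 1) * √((n : ℝ) + 1) = n + 1 := Real.mul_self_sqrt (by positivity)
  rw [← ofReal_sum_of_nonneg fun k _ => by positivity, ← ofReal_mul (by positivity)]
  calc ENNReal.ofReal ((∑ k ∈ range (n + 1), 4 / √((k : ℝ) + 1)) * ((n + 1) * √(n + 1)))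
      ≤ ENNReal.ofReal (8 * √((n : ℝ) + 1) * ((n + 1) * √(n + 1))) := by gcongr
    _ = 8 * ((n : ℝ≥0∞) + 1) ^ 2 := by
      rw [show 8 * √((n : ℝ) + 1) * ((n + 1) * √(n + 1)) = 8 * ((n : ℝ) + 1) ^ 2 by
        linear_combination (8 * ((n : ℝ) + 1)) * hsq]
      rw [ofReal_mul (by norm_num), ofReal_pow (by positivity)]
      norm_cast

theorem tsum_sq_tsum_add_le (x : ℕ → ℝ≥0∞) :
    ∑' j, (∑' p, x (j + p)) ^ 2 ≤ 8 * ∑' n : ℕ, ((n : ℝ≥0∞) + 1) ^ 2 * x n ^ 2 := by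
  set W : ℕ → ℝ≥0∞ := fun n => ENNReal.ofReal ((n + 1) * √(n + 1))
  set r : ℕ → ℝ≥0∞ := fun n => ENNReal.ofReal (4 / √(n + 1))
  have hW₀ : ∀ n, W n ≠ 0 := fun n => by simp only [W]; positivity
  have hW : ∀ n, W n ≠ ∞ := fun n => ofReal_ne_top
  have htail : ∀ j, ∑' p, (W (j + p))⁻¹ ≤ r j := fun j => by
    have hWinv : ∀ n, (W n)⁻¹ = ENNReal.ofReal (1 / ((n + 1) * √(n + 1))) := fun n => by
      rw [one_div, ofReal_inv_of_pos (by positivity)]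
    simpa only [hWinv, Nat.cast_add] using tsum_ofReal_one_div_mul_sqrt_le j
  calc ∑' j, (∑' p, x (j + p)) ^ 2
      ≤ ∑' j, ∑' p, r j * (W (j + p) * x (j + p) ^ 2) := by
        refine ENNReal.tsum_le_tsum fun j => ?_
        rw [ENNReal.tsum_mul_left]
        exact (sq_tsum_le_tsum_inv_mul_tsum _ _ (fun p => hW₀ _) fun p => hW _).trans
          (mul_le_mul_left (htail j) _)
    _ = ∑' n, (∑ k ∈ range (n + 1), r k) * (W n * x n ^ 2) :=
        tsum_tsum_mul_add_eq_tsum_sum_range_mul r fun n => W n * x n ^ 2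
    _ ≤ ∑' n : ℕ, 8 * (((n : ℝ≥0∞) + 1) ^ 2 * x n ^ 2) := ENNReal.tsum_le_tsum fun n => by
        rw [← mul_assoc, ← mul_assoc]
        exact mul_le_mul_left (sum_range_ofReal_div_sqrt_mul_le n) _
    _ = 8 * ∑' n : ℕ, ((n : ℝ≥0∞) + 1) ^ 2 * x n ^ 2 := ENNReal.tsum_mul_left

theorem tsum_sq_tsum_add_le_prod (X : ℕ → ℕ → ℝ≥0∞) :
    ∑' j : ℕ × ℕ, (∑' p : ℕ × ℕ, X (j.1 + p.1) (j.2 + p.2)) ^ 2 ≤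
      64 * ∑' i : ℕ × ℕ, ((i.1 : ℝ≥0∞) + 1) ^ 2 * ((i.2 : ℝ≥0∞) + 1) ^ 2 * X i.1 i.2 ^ 2 := by
  set U : ℕ → ℕ → ℝ≥0∞ := fun i₁ j₂ => ∑' p₂, X i₁ (j₂ + p₂)
  calc ∑' j : ℕ × ℕ, (∑' p : ℕ × ℕ, X (j.1 + p.1) (j.2 + p.2)) ^ 2
      = ∑' j₂, ∑' j₁, (∑' p₁, U (j₁ + p₁) j₂) ^ 2 := by
        simp only [ENNReal.tsum_prod', U]
        exact ENNReal.tsum_comm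
    _ ≤ ∑' j₂, 8 * ∑' i₁ : ℕ, ((i₁ : ℝ≥0∞) + 1) ^ 2 * U i₁ j₂ ^ 2 :=
        ENNReal.tsum_le_tsum fun j₂ => tsum_sq_tsum_add_le fun i₁ => U i₁ j₂
    _ = 8 * ∑' i₁ : ℕ, ((i₁ : ℝ≥0∞) + 1) ^ 2 * ∑' j₂, U i₁ j₂ ^ 2 := by
        rw [ENNReal.tsum_mul_left, ENNReal.tsum_comm]
        simp only [ENNReal.tsum_mul_left]
    _ ≤ 8 * ∑' i₁ : ℕ, ((i₁ : ℝ≥0∞) + 1) ^ 2 *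
          (8 * ∑' i₂ : ℕ, ((i₂ : ℝ≥0∞) + 1) ^ 2 * X i₁ i₂ ^ 2) := by
        gcongr with i₁
        exact tsum_sq_tsum_add_le (X i₁)
    _ = 64 * ∑' i : ℕ × ℕ, ((i.1 : ℝ≥0∞) + 1) ^ 2 * ((i.2 : ℝ≥0∞) + 1) ^ 2 * X i.1 i.2 ^ 2 := by
        simp only [ENNReal.tsum_prod', ← ENNReal.tsum_mul_left, mul_assoc]
        exact tsum_congr fun i₁ => tsum_congr fun i₂ => by ring

end ENNReal

/-- `a i j` stands for `a_{i+1,j+1}`. -/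
theorem stmt2 : ∃ C : ℝ, 0 < C ∧ ∀ a : ℕ → ℕ → ℝ,
    Summable (fun p : ℕ × ℕ =>
        ((p.1 : ℝ) + 1) ^ 2 * ((p.2 : ℝ) + 1) ^ 2 * a p.1 p.2 ^ 2) →
      (∀ j₁ j₂ : ℕ, Summable fun p : ℕ × ℕ => |a (j₁ + p.1) (j₂ + p.2)|) ∧
      Summable (fun j : ℕ × ℕ =>
        (∑' p : ℕ × ℕ, a (j.1 + p.1) (j.2 + p.2)) ^ 2) ∧
      ∑' j : ℕ × ℕ, (∑' p : ℕ × ℕ, a (j.1 + p.1) (j.2 + p.2)) ^ 2 ≤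
        C * ∑' p : ℕ × ℕ,
          ((p.1 : ℝ) + 1) ^ 2 * ((p.2 : ℝ) + 1) ^ 2 * a p.1 p.2 ^ 2 := by
  refine ⟨64, by norm_num, fun a ha => ?_⟩
  set S := ∑' p : ℕ × ℕ, ((p.1 : ℝ) + 1) ^ 2 * ((p.2 : ℝ) + 1) ^ 2 * a p.1 p.2 ^ 2
  have hS : ∑' p : ℕ × ℕ, ((p.1 : ℝ≥0∞) + 1) ^ 2 * ((p.2 : ℝ≥0∞) + 1) ^ 2 * ‖a p.1 p.2‖ₑ ^ 2 =
      ENNReal.ofReal S := by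
    rw [ENNReal.ofReal_tsum_of_nonneg (fun p => by positivity) ha]
    refine tsum_congr fun p => ?_
    rw [Real.enorm_eq_ofReal_abs, ← ENNReal.ofReal_pow (abs_nonneg _), sq_abs,
      ENNReal.ofReal_mul (by positivity), ENNReal.ofReal_mul (by positivity)]
    norm_cast
  have hbound := (ENNReal.tsum_sq_tsum_add_le_prod fun i j => ‖a i j‖ₑ).trans_eq (by rw [hS])
  have hfin : ∀ j : ℕ × ℕ, ∑' p : ℕ × ℕ, ‖a (j.1 + p.1) (j.2 + p.2)‖ₑ ≠ ∞ := fun j htop => by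
    have h := (ENNReal.le_tsum j).trans hbound
    rw [htop, ENNReal.top_pow two_ne_zero, top_le_iff] at h
    exact ENNReal.mul_ne_top (by norm_num) ENNReal.ofReal_ne_top h
  obtain ⟨hsum, hle⟩ := Real.summable_and_tsum_le_of_tsum_enorm_le
    (f := fun j : ℕ × ℕ => (∑' p : ℕ × ℕ, a (j.1 + p.1) (j.2 + p.2)) ^ 2) (c := 64 * S)
    (mul_nonneg (by norm_num) (tsum_nonneg fun p => by positivity)) <|
    calc _ ≤ ∑' j : ℕ × ℕ, (∑' p : ℕ × ℕ, ‖a (j.1 + p.1) (j.2 + p.2)‖ₑ) ^ 2 :=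
          ENNReal.tsum_le_tsum fun j => by rw [enorm_pow]; gcongr; exact enorm_tsum_le_tsum_enorm
      _ ≤ _ := hbound
      _ = _ := by rw [ENNReal.ofReal_mul (by norm_num)]; norm_num
  refine ⟨fun j₁ j₂ => ?_, hsum, hle⟩
  simpa using tsum_enorm_ne_top_iff_summable_norm.1 (hfin (j₁, j₂))
end

section
/- Define n_k = 2^k and ε_k = 2^{-k}/k for k ≥ 1, ε_0 = 1. Let a_i = ε_k if i = n_k for some k ≥ 0, and a_i = 0 otherwise. Then ∑_{i=0}^∞ i² a_i² < ∞ while ∑_{j=0}^∞ (∑_{i=j}^∞ a_i²)^{1/2} = ∞. -/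
/-!
Only the powers of two carry mass, and `2 ^ k · a (2 ^ k) = 1 / k`. Hence `i² a_i²` summed over
`i = 2 ^ k` is `∑ 1 / k²`, which converges. The tails `S j = (∑_{i ≥ j} a_i²)^{1/2}` are
antitone and `S j ≥ |a (2 ^ k)|` for `j ≤ 2 ^ k`, so by Cauchy condensation `∑ S j < ∞` would force
`∑ 2 ^ k S (2 ^ k) ≥ ∑ 1 / k` to converge.
-/

section Tail

variable {f : ℕ → ℝ}

theorem tsum_nat_add_antitone (hf0 : ∀ i, 0 ≤ f i) (hf : Summable f) :
    Antitone fun j => ∑' i, f (j + i) := by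
  intro j n hjn
  have hinj : Function.Injective fun i => n - j + i := add_right_injective _
  have hsum : Summable fun i => f (j + i) := hf.comp_injective (add_right_injective j)
  calc ∑' i, f (n + i) = ∑' i, f (j + (n - j + i)) := by
        congr 1; ext i; congr 1; omega
    _ ≤ ∑' i, f (j + i) := tsum_comp_le_tsum_of_inj hsum (fun i => hf0 _) hinj

theorem le_tsum_nat_add (hf0 : ∀ i, 0 ≤ f i) (hf : Summable f) {j n : ℕ} (hjn : j ≤ n) :
    f n ≤ ∑' i, f (j + i) := by
  have hsum : Summable fun i => f (j + i) := hf.comp_injective (add_right_injective j)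
  simpa [Nat.add_sub_cancel' hjn] using hsum.le_tsum (n - j) fun i _ => hf0 _

end Tail

section SqrtTail

variable {a : ℕ → ℝ}

theorem summable_sq_of_summable_natCast_sq_mul_sq
    (ha : Summable fun i : ℕ => (i : ℝ) ^ 2 * a i ^ 2) : Summable fun i => a i ^ 2 := by
  refine (summable_nat_add_iff 1).1 <| ((summable_nat_add_iff 1).2 ha).of_nonneg_of_le
    (fun i => sq_nonneg _) fun i => ?_
  have : (1 : ℝ) ≤ ((i + 1 : ℕ) : ℝ) ^ 2 := one_le_pow₀ (by simp)
  nlinarith [sq_nonneg (a (i + 1))]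

theorem abs_le_sqrt_tsum_sq_nat_add (ha : Summable fun i => a i ^ 2) {j n : ℕ} (hjn : j ≤ n) :
    |a n| ≤ √(∑' i, a (j + i) ^ 2) := by
  rw [← Real.sqrt_sq_eq_abs]
  exact Real.sqrt_le_sqrt (le_tsum_nat_add (fun i => sq_nonneg _) ha hjn)

theorem not_summable_sqrt_tsum_sq_nat_add (ha : Summable fun i => a i ^ 2)
    (hdiv : ¬ Summable fun k => (2 : ℝ) ^ k * |a (2 ^ k)|) :
    ¬ Summable fun j => √(∑' i, a (j + i) ^ 2) := by
  intro hS
  have hanti : Antitone fun j => √(∑' i, a (j + i) ^ 2) :=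
    fun j n hjn => Real.sqrt_le_sqrt (tsum_nat_add_antitone (fun i => sq_nonneg _) ha hjn)
  have hcond := (summable_condensed_iff_of_nonneg (fun j => Real.sqrt_nonneg _)
    fun m n _ hmn => hanti hmn).2 hS
  exact hdiv <| hcond.of_nonneg_of_le (fun k => by positivity) fun k =>
    mul_le_mul_of_nonneg_left (abs_le_sqrt_tsum_sq_nat_add ha le_rfl) (by positivity)

end SqrtTail

theorem stmt9_general (a : ℕ → ℝ)
    (h2 : ∀ k : ℕ, 1 ≤ k → a (2 ^ k) = (2 : ℝ) ^ (-(k : ℤ)) / (k : ℝ))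
    (h0 : ∀ i : ℕ, (¬ ∃ k : ℕ, i = 2 ^ k) → a i = 0) :
    Summable (fun i : ℕ => (i : ℝ) ^ 2 * a i ^ 2) ∧
    ¬ Summable (fun j : ℕ => Real.sqrt (∑' i : ℕ, a (j + i) ^ 2)) := by
  have hcondensed : ∀ k : ℕ, 1 ≤ k → (2 : ℝ) ^ k * a (2 ^ k) = 1 / k := fun k hk => by
    rw [h2 k hk, zpow_neg, zpow_natCast]
    field_simp
  have hsupp : ∀ i ∉ Set.range (2 ^ · : ℕ → ℕ), (i : ℝ) ^ 2 * a i ^ 2 = 0 := by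
    intro i hi
    rw [h0 i fun ⟨k, hk⟩ => hi ⟨k, hk.symm⟩]
    ring
  have hsummable : Summable fun i : ℕ => (i : ℝ) ^ 2 * a i ^ 2 := by
    refine ((Nat.pow_right_injective le_rfl).summable_iff hsupp).1 ?_
    refine (Real.summable_one_div_nat_pow.2 one_lt_two).congr_cofinite ?_
    filter_upwards [Filter.eventually_cofinite_ne 0] with k hk
    simp only [Function.comp_apply, Nat.cast_pow, Nat.cast_ofNat]
    rw [← mul_pow, hcondensed k (Nat.one_le_iff_ne_zero.2 hk), div_pow, one_pow]
  refine ⟨hsummable, not_summable_sqrt_tsum_sq_nat_add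
    (summable_sq_of_summable_natCast_sq_mul_sq hsummable) fun h => ?_⟩
  refine Real.not_summable_one_div_natCast (h.of_nonneg_of_le (fun k => by positivity) fun k => ?_)
  rcases Nat.eq_zero_or_pos k with rfl | hk
  · simp
  · rw [← hcondensed k hk]
    exact mul_le_mul_of_nonneg_left (le_abs_self _) (by positivity)

/-- Remark 3, numerical core: with `a_{2^k} = ε_k` (`ε_0 = 1`,
`ε_k = 2^{-k}/k`) and `a_i = 0` otherwise, `∑ i² a_i² < ∞` while
`∑_j (∑_{i≥j} a_i²)^{1/2} = ∞`. -/
theorem stmt9 (a : ℕ → ℝ)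
    (h1 : a 1 = 1)
    (h2 : ∀ k : ℕ, 1 ≤ k → a (2 ^ k) = (2 : ℝ) ^ (-(k : ℤ)) / (k : ℝ))
    (h0 : ∀ i : ℕ, (¬ ∃ k : ℕ, i = 2 ^ k) → a i = 0) :
    Summable (fun i : ℕ => (i : ℝ) ^ 2 * a i ^ 2) ∧
    ¬ Summable (fun j : ℕ => Real.sqrt (∑' i : ℕ, a (j + i) ^ 2)) :=
  stmt9_general a h2 h0
end

section
/- Let (b_{j₁,j₂})_{j₁,j₂≥1} be nonnegative, nonincreasing in each coordinate, with ∑_{j₁,j₂≥1} b_{j₁,j₂} < ∞. Then ∑_{j₁=1}^∞ ∑_{j₂=1}^∞ j₁ j₂ b_{j₁,j₂}² < ∞. -/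
/-! Monotonicity gives `(j₁ + 1)(j₂ + 1) b_{j₁,j₂} ≤ S := ∑ b`, as the left side is at most the sum
of `b` over the rectangle below `(j₁, j₂)`. Hence `(j₁ + 1)(j₂ + 1) b_{j₁,j₂}² ≤ S b_{j₁,j₂}`,
which is summable; this replaces the Cauchy–Schwarz step by the cruder bound `sup · ∑`. -/

open Finset

lemma Antitone.card_Iic_mul_le_tsum {α : Type*} [Preorder α] [LocallyFiniteOrderBot α]
    {f : α → ℝ} (hf : Antitone f) (hf₀ : 0 ≤ f) (hs : Summable f) (a : α) :
    #(Iic a) * f a ≤ ∑' x, f x :=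
  calc (#(Iic a) : ℝ) * f a = ∑ _ ∈ Iic a, f a := by rw [sum_const, nsmul_eq_mul]
    _ ≤ ∑ x ∈ Iic a, f x := sum_le_sum fun x hx => hf (mem_Iic.1 hx)
    _ ≤ ∑' x, f x := hs.sum_le_tsum _ fun x _ => hf₀ x

lemma Summable.mul_sq_of_mul_le {α : Type*} {f g : α → ℝ} (hf₀ : 0 ≤ f) (hg₀ : 0 ≤ g)
    (hs : Summable f) {C : ℝ} (hC : ∀ x, g x * f x ≤ C) :
    Summable fun x => g x * f x ^ 2 := by
  refine (hs.mul_left C).of_nonneg_of_le (fun x => mul_nonneg (hg₀ x) (sq_nonneg _)) fun x => ?_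
  calc g x * f x ^ 2 = g x * f x * f x := by ring
    _ ≤ C * f x := mul_le_mul_of_nonneg_right (hC x) (hf₀ x)

/-- d = 2 estimate in the proof of Remark 2: a nonnegative
array, nonincreasing in each coordinate and summable, satisfies
`∑_{j₁,j₂} j₁ j₂ b_{j₁,j₂}² < ∞` (here `b j₁ j₂` stands for `b_{j₁+1,j₂+1}`). -/
theorem stmt17 (b : ℕ → ℕ → ℝ)
    (hpos : ∀ j₁ j₂, 0 ≤ b j₁ j₂)
    (hmono₁ : ∀ j₂, Antitone fun j₁ => b j₁ j₂)
    (hmono₂ : ∀ j₁, Antitone fun j₂ => b j₁ j₂)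
    (hsum : Summable fun p : ℕ × ℕ => b p.1 p.2) :
    Summable (fun p : ℕ × ℕ =>
      ((p.1 : ℝ) + 1) * ((p.2 : ℝ) + 1) * b p.1 p.2 ^ 2) := by
  have hanti : Antitone fun p : ℕ × ℕ => b p.1 p.2 := antitone_prod_iff.2 ⟨hmono₂, hmono₁⟩
  have hbound (p : ℕ × ℕ) : ((p.1 : ℝ) + 1) * (p.2 + 1) * b p.1 p.2 ≤ ∑' q : ℕ × ℕ, b q.1 q.2 := by
    simpa [card_Iic_prod, Nat.card_Iic] using hanti.card_Iic_mul_le_tsum (fun q => hpos _ _) hsum p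
  exact hsum.mul_sq_of_mul_le (fun p => hpos p.1 p.2) (fun p => by positivity) hbound
end
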